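/- arXiv:1807.07109 — 7 statements merged into one kernel-verified Lean document; each statement's English description precedes it below -/
import Mathlib

section
/- For n ≥ 1 and 2 ≤ k ≤ 2n-2 with k ≠ n, the partial sum trinomial coefficients satisfy S(n,k) = S(n-1,k-2) + S(n-1,k-1) + S(n-1,k); and for k = n ≥ 2, S(n,n) = S(n-1,n-2) + S(n-1,n-1) + S(n-1,n) + 1. -/
open Finset

/-- Trinomial coefficient: coefficient of x^i in (1+x+x^2)^n, zero for i<0 (and automatically zero for i>2n). -/
def T (n : ℕ) (i : ℤ) : ℕ :=
  if 0 ≤ i then ∑ j ∈ Finset.range (i.toNat + 1), n.choose j * j.choose (i.toNat - j) else 0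

/-- Partial sum trinomial coefficient. -/
def S (n : ℕ) (k : ℤ) : ℕ :=
  ∑ j ∈ Finset.range (n + 1), T (n - j) (k - j)

/-!
The row `T n` is the coefficient sequence of `(1 + X + X ^ 2) ^ n`, so multiplying by
`1 + X + X ^ 2` gives the three-term recurrence `T (n + 1) k = T n (k - 2) + T n (k - 1) + T n k`.
Summing it over the terms of `S (n + 1) k` yields the three-term recurrence for `S`, except for the
last term `T 0 (k - n - 1)`, which has no counterpart in `S n` and contributes `1` exactly when
`k = n + 1`.
-/

theorem Finset.sum_range_eq_sum_range_ite {M : Type*} [AddCommMonoid M] {f : ℕ → M} {n : ℕ}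
    (hf : ∀ j, n < j → f j = 0) (m : ℕ) :
    ∑ j ∈ range (m + 1), f j = ∑ j ∈ range (n + 1), if j ≤ m then f j else 0 := by
  rw [← sum_filter]
  refine (sum_subset (fun j => by simp only [mem_filter, mem_range]; omega)
    fun j hj hj' => hf j ?_).symm
  simp only [mem_range, mem_filter, not_and, not_le] at hj hj'
  omega

open Polynomial

namespace Polynomial

variable {R : Type*} [CommSemiring R]

def coeffInt (p : R[X]) (i : ℤ) : R :=
  if 0 ≤ i then p.coeff i.toNat else 0

theorem coeffInt_natCast (p : R[X]) (m : ℕ) : p.coeffInt m = p.coeff m := by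
  simp [coeffInt]

theorem coeffInt_of_neg (p : R[X]) {i : ℤ} (hi : i < 0) : p.coeffInt i = 0 :=
  if_neg (by omega)

theorem coeffInt_add (p q : R[X]) (i : ℤ) :
    (p + q).coeffInt i = p.coeffInt i + q.coeffInt i := by
  unfold coeffInt
  split_ifs <;> simp

theorem coeffInt_X_pow_mul (p : R[X]) (j : ℕ) (i : ℤ) :
    (X ^ j * p).coeffInt i = p.coeffInt (i - j) := by
  rcases lt_or_ge i 0 with hi | hi
  · rw [coeffInt_of_neg _ hi, coeffInt_of_neg _ (by omega)]
  lift i to ℕ using hi with m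
  rw [coeffInt_natCast, coeff_X_pow_mul']
  split_ifs with hjm
  · rw [← Nat.cast_sub hjm, coeffInt_natCast]
  · rw [coeffInt_of_neg _ (by omega)]

theorem coeffInt_one (i : ℤ) : (1 : R[X]).coeffInt i = if i = 0 then 1 else 0 := by
  rcases lt_or_ge i 0 with hi | hi
  · rw [coeffInt_of_neg _ hi, if_neg hi.ne]
  · lift i to ℕ using hi with m
    simp [coeffInt_natCast, coeff_one]

theorem coeffInt_one_add_X_add_X_sq_mul (p : R[X]) (i : ℤ) :
    ((1 + X + X ^ 2) * p).coeffInt i = p.coeffInt (i - 2) + p.coeffInt (i - 1) + p.coeffInt i := by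
  have hp : (1 + X + X ^ 2) * p = X ^ 2 * p + X ^ 1 * p + X ^ 0 * p := by ring
  simp only [hp, coeffInt_add, coeffInt_X_pow_mul, Nat.cast_ofNat, Nat.cast_one, Nat.cast_zero,
    sub_zero]

theorem coeff_one_add_X_add_X_sq_pow (n m : ℕ) :
    ((1 + X + X ^ 2 : R[X]) ^ n).coeff m
      = ∑ j ∈ range (n + 1), if j ≤ m then (n.choose j * j.choose (m - j) : R) else 0 := by
  have h : (1 + X + X ^ 2 : R[X]) = X * (1 + X) + 1 := by ring
  rw [h, add_pow, finsetSum_coeff]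
  refine sum_congr rfl fun j _ => ?_
  rw [one_pow, mul_one, mul_comm, mul_pow, ← mul_assoc, ← C_eq_natCast, mul_assoc, coeff_C_mul,
    coeff_X_pow_mul', coeff_one_add_X_pow]
  split_ifs <;> simp

end Polynomial

theorem T_eq_coeffInt (n : ℕ) (k : ℤ) : T n k = ((1 + X + X ^ 2 : ℕ[X]) ^ n).coeffInt k := by
  rcases lt_or_ge k 0 with hk | hk
  · rw [T, if_neg (by omega), coeffInt_of_neg _ hk]
  lift k to ℕ using hk with m
  rw [T, if_pos (by omega), Int.toNat_natCast, coeffInt_natCast, coeff_one_add_X_add_X_sq_pow,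
    Finset.sum_range_eq_sum_range_ite (fun j hj => by rw [Nat.choose_eq_zero_of_lt hj, zero_mul])]
  simp

theorem T_zero (k : ℤ) : T 0 k = if k = 0 then 1 else 0 := by
  rw [T_eq_coeffInt, pow_zero, coeffInt_one]

theorem T_succ (n : ℕ) (k : ℤ) : T (n + 1) k = T n (k - 2) + T n (k - 1) + T n k := by
  simp only [T_eq_coeffInt]
  rw [pow_succ', coeffInt_one_add_X_add_X_sq_mul]

theorem S_succ (n : ℕ) (k : ℤ) :
    S (n + 1) k = S n (k - 2) + S n (k - 1) + S n k + if k = n + 1 then 1 else 0 := by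
  have hlast : T (n + 1 - (n + 1)) (k - (n + 1 : ℕ)) = if k = n + 1 then 1 else 0 := by
    rw [Nat.sub_self, T_zero]
    exact if_congr (by push_cast; omega) rfl rfl
  have hstep : ∀ j ∈ range (n + 1),
      T (n + 1 - j) (k - j)
        = T (n - j) (k - 2 - j) + T (n - j) (k - 1 - j) + T (n - j) (k - j) := by
    intro j hj
    rw [show n + 1 - j = n - j + 1 by simp at hj; omega, T_succ, sub_right_comm k 2,
      sub_right_comm k 1]
  rw [S, sum_range_succ, hlast, sum_congr rfl hstep, sum_add_distrib, sum_add_distrib, S, S, S]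

theorem partial_sum_three_term (n : ℕ) :
    (∀ k : ℤ, 1 ≤ n → 2 ≤ k → k ≤ 2 * n - 2 → k ≠ n →
      S n k = S (n - 1) (k - 2) + S (n - 1) (k - 1) + S (n - 1) k) ∧
    (2 ≤ n →
      S n n = S (n - 1) ((n : ℤ) - 2) + S (n - 1) ((n : ℤ) - 1) + S (n - 1) n + 1) := by
  refine ⟨fun k hn _ _ hkn => ?_, fun hn => ?_⟩
  all_goals obtain ⟨m, rfl⟩ : ∃ m, n = m + 1 := ⟨n - 1, by omega⟩
  · rw [Nat.add_sub_cancel, S_succ, if_neg (by push_cast at hkn; exact hkn), add_zero]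
  · rw [Nat.add_sub_cancel, Nat.cast_succ, S_succ, if_pos rfl]
end

section
/- For every nonnegative integer n, ∑_{k=0}^{2n} (-1)^k k·S(n,k) equals 0 if n is odd or n = 0, and equals n if n is even and positive. -/
/-!
`S n k` is the coefficient of `x^k` in `P_n = ∑_{j ≤ n} x^j (1 + x + x^2)^(n - j)`, and for any
polynomial `P = ∑ a_k x^k` one has `∑ (-1)^k k a_k = -P'(-1)`. Since `1 + x + x^2` takes the value
`1` and has derivative `-1` at `x = -1`, the term `x^j (1 + x + x^2)^m` contributes
`-(-1)^j (j + m)` to `P_n'(-1)`. With `j + m = n` this gives `P_n'(-1) = -n ∑_{j ≤ n} (-1)^j`,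
which is `-n` for even `n` and `0` for odd `n`.
-/

open Finset

open Polynomial

theorem Polynomial.sum_range_pow_mul_mul_coeff_eq_mul_eval_derivative {R : Type*}
    [CommSemiring R] {p : R[X]} {N : ℕ} (hp : p.natDegree ≤ N) (x : R) :
    ∑ k ∈ range (N + 1), x ^ k * k * p.coeff k = x * (derivative p).eval x := by
  rw [derivative_eval, sum_over_range' p (fun _ => by simp) (N + 1) (by omega), mul_sum]
  refine sum_congr rfl fun k _ => ?_
  rcases k with _ | k
  · simp
  · rw [Nat.add_sub_cancel, pow_succ']
    ring

theorem coeff_trinomial_pow (n k : ℕ) : ((1 + X + X ^ 2 : ℤ[X]) ^ n).coeff k = T n k := by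
  set f : ℕ → ℤ := fun m => n.choose m * if m ≤ k then (m.choose (k - m) : ℤ) else 0
  have hf : ∀ m,
      ((X * (1 + X) : ℤ[X]) ^ m * 1 ^ (n - m) * (n.choose m : ℤ[X])).coeff k = f m := by
    intro m
    rw [one_pow, mul_one, ← C_eq_natCast, coeff_mul_C, mul_pow, coeff_X_pow_mul',
      mul_comm]
    split_ifs <;> simp [f, coeff_one_add_X_pow, *]
  calc ((1 + X + X ^ 2 : ℤ[X]) ^ n).coeff k
      = ∑ m ∈ range (n + 1), f m := by
        rw [show (1 + X + X ^ 2 : ℤ[X]) = X * (1 + X) + 1 by ring, add_pow, finsetSum_coeff]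
        exact sum_congr rfl fun m _ => hf m
    _ = ∑ m ∈ range (n + k + 1), f m :=
        sum_subset (range_subset_range.2 (by omega)) fun m _ hm => by
          simp [f, Nat.choose_eq_zero_of_lt (show n < m by simpa using hm)]
    _ = ∑ m ∈ range (k + 1), f m :=
        (sum_subset (range_subset_range.2 (by omega)) fun m _ hm => by
          simp [f, show ¬ m ≤ k by simpa using hm]).symm
    _ = T n k := by
        rw [T, if_pos (by positivity), Int.toNat_natCast]
        push_cast
        exact sum_congr rfl fun m hm => by
          simp [f, show m ≤ k by simpa [Nat.lt_succ_iff] using hm]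

theorem coeff_X_pow_mul_trinomial_pow (m j k : ℕ) :
    (X ^ j * (1 + X + X ^ 2 : ℤ[X]) ^ m).coeff k = (T m ((k : ℤ) - j) : ℤ) := by
  rw [coeff_X_pow_mul']
  split_ifs with hjk
  · rw [coeff_trinomial_pow, Nat.cast_sub hjk]
  · rw [T, if_neg (by omega), Nat.cast_zero]

noncomputable def partialTrinomialPoly (n : ℕ) : ℤ[X] :=
  ∑ j ∈ range (n + 1), X ^ j * (1 + X + X ^ 2) ^ (n - j)

theorem coeff_partialTrinomialPoly (n k : ℕ) : (partialTrinomialPoly n).coeff k = S n k := by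
  simp [partialTrinomialPoly, S, finsetSum_coeff, coeff_X_pow_mul_trinomial_pow]

theorem natDegree_partialTrinomialPoly_le (n : ℕ) :
    (partialTrinomialPoly n).natDegree ≤ 2 * n := by
  refine natDegree_sum_le_of_forall_le _ _ fun j hj => ?_
  have hq : (1 + X + X ^ 2 : ℤ[X]).natDegree ≤ 2 := by compute_degree
  calc (X ^ j * (1 + X + X ^ 2 : ℤ[X]) ^ (n - j)).natDegree
      ≤ j + (n - j) * 2 :=
        natDegree_mul_le_of_le (natDegree_X_pow_le j) (natDegree_pow_le_of_le _ hq)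
    _ ≤ 2 * n := by have := mem_range.1 hj; omega

theorem eval_neg_one_derivative_X_pow_mul_trinomial_pow (j m : ℕ) :
    (derivative (X ^ j * (1 + X + X ^ 2 : ℤ[X]) ^ m)).eval (-1) =
      -((-1 : ℤ) ^ j * (j + m)) := by
  simp only [derivative_mul, derivative_pow, derivative_add, derivative_one, derivative_X,
    eval_add, eval_mul, eval_pow, eval_X, eval_one, eval_zero, eval_C]
  rcases j with _ | j
  · simp
  · push_cast
    ring

theorem eval_neg_one_derivative_partialTrinomialPoly (n : ℕ) :
    (derivative (partialTrinomialPoly n)).eval (-1) = if Even n then -(n : ℤ) else 0 := by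
  simp only [partialTrinomialPoly, derivative_sum, eval_finsetSum,
    eval_neg_one_derivative_X_pow_mul_trinomial_pow]
  have hterm : ∀ j ∈ range (n + 1),
      -((-1 : ℤ) ^ j * (j + (n - j : ℕ))) = -(n * (-1) ^ j) := by
    intro j hj
    rw [Nat.cast_sub (Nat.lt_succ_iff.1 (mem_range.1 hj))]
    ring
  rw [sum_congr rfl hterm, sum_neg_distrib, ← mul_sum, neg_one_geom_sum]
  by_cases hn : Even n <;> simp [hn, Nat.even_add_one]

theorem partial_sum_alt_weighted_sum (n : ℕ) :
    ∑ k ∈ Finset.range (2 * n + 1), (-1 : ℤ) ^ k * k * S n k =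
      if Odd n ∨ n = 0 then 0 else n := by
  simp_rw [← coeff_partialTrinomialPoly]
  rw [sum_range_pow_mul_mul_coeff_eq_mul_eval_derivative (natDegree_partialTrinomialPoly_le n),
    eval_neg_one_derivative_partialTrinomialPoly]
  rcases Nat.even_or_odd n with hn | hn
  · rcases eq_or_ne n 0 with rfl | hn0
    · simp
    · simp [hn, hn0, Nat.not_odd_iff_even.2 hn]
  · simp [hn, Nat.not_even_iff_odd.2 hn]
end

section
/- The column sum s_n = ∑_{i=0}^{n} a(i,n) of the trinomial transform triangle satisfies s_n = ∑_{ℓ=0}^{2n} S(n,ℓ)·a_ℓ. -/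
open Finset

/-! Reading `X ^ k` as `a k` (the linear functional `umbral a`), the recurrence for the
triangle becomes multiplication by `1 + X + X ^ 2`, so that
`a(i, k) = umbral a (X ^ (k - i) * (1 + X + X ^ 2) ^ i)`. Summing over a column, `s_n` is the
value of `∑ j ≤ n, X ^ j * (1 + X + X ^ 2) ^ (n - j)`, whose `l`-th coefficient is `S(n, l)`
because `T(m, i)` is the `i`-th coefficient of `(1 + X + X ^ 2) ^ m`. -/

open Polynomial

noncomputable def trinomialPoly : ℤ[X] := 1 + X + X ^ 2

lemma natDegree_trinomialPoly_pow_le (n : ℕ) : (trinomialPoly ^ n).natDegree ≤ 2 * n := by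
  calc (trinomialPoly ^ n).natDegree ≤ n * trinomialPoly.natDegree := natDegree_pow_le
    _ ≤ n * 2 := Nat.mul_le_mul_left n (by unfold trinomialPoly; compute_degree)
    _ = 2 * n := mul_comm n 2

lemma coeff_trinomialPoly_pow (n m : ℕ) :
    (trinomialPoly ^ n).coeff m =
      ∑ j ∈ range (m + 1), (n.choose j * j.choose (m - j) : ℤ) := by
  have hexpand : trinomialPoly ^ n =
      ∑ k ∈ range (n + 1), X ^ k * (1 + X) ^ k * (n.choose k : ℤ[X]) := by
    rw [show trinomialPoly = X * (1 + X) + 1 by unfold trinomialPoly; ring, add_pow]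
    simp only [mul_pow, one_pow, mul_one]
  have hcoeff : ∀ N, n + 1 ≤ N → (trinomialPoly ^ n).coeff m =
      ∑ k ∈ range N, if k ≤ m then (n.choose k * k.choose (m - k) : ℤ) else 0 := by
    intro N hn
    rw [hexpand, finsetSum_coeff]
    refine sum_subset (range_subset_range.2 hn) (fun k _ hk => ?_)
      |>.trans (sum_congr rfl fun k _ => ?_)
    · rw [mem_range] at hk
      simp [Nat.choose_eq_zero_of_lt (by omega : n < k)]
    · rw [coeff_mul_natCast, coeff_X_pow_mul', coeff_one_add_X_pow]
      split_ifs <;> simp [mul_comm]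
  rw [hcoeff (n + m + 1) (by omega),
    ← sum_subset (range_subset_range.2 (by omega : m + 1 ≤ n + m + 1))]
  · exact sum_congr rfl fun k hk => if_pos (Nat.lt_succ_iff.1 (mem_range.1 hk))
  · intro k _ hk
    rw [mem_range] at hk
    exact if_neg (by omega)

lemma T_natCast (n m : ℕ) : (T n m : ℤ) = (trinomialPoly ^ n).coeff m := by
  simp [T, coeff_trinomialPoly_pow]

lemma T_natCast_sub_natCast (n j l : ℕ) :
    (T n ((l : ℤ) - j) : ℤ) = (X ^ j * trinomialPoly ^ n).coeff l := by
  rw [coeff_X_pow_mul']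
  split_ifs with h
  · rw [← T_natCast, Nat.cast_sub h]
  · rw [T, if_neg (by omega), Nat.cast_zero]

lemma S_eq_coeff (n l : ℕ) :
    (S n l : ℤ) = (∑ j ∈ range (n + 1), X ^ j * trinomialPoly ^ (n - j)).coeff l := by
  simp only [S, Nat.cast_sum, finsetSum_coeff, T_natCast_sub_natCast]

lemma natDegree_sum_X_pow_mul_trinomialPoly_pow_le (n : ℕ) :
    (∑ j ∈ range (n + 1), X ^ j * trinomialPoly ^ (n - j)).natDegree ≤ 2 * n := by
  refine natDegree_sum_le_of_forall_le _ _ fun j hj => ?_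
  have hjn := mem_range.1 hj
  calc (X ^ j * trinomialPoly ^ (n - j)).natDegree
      ≤ (X ^ j : ℤ[X]).natDegree + (trinomialPoly ^ (n - j)).natDegree := natDegree_mul_le
    _ ≤ j + 2 * (n - j) := add_le_add (natDegree_X_pow_le j) (natDegree_trinomialPoly_pow_le _)
    _ ≤ 2 * n := by omega

noncomputable def umbral (a : ℕ → ℤ) : ℤ[X] →ₗ[ℤ] ℤ :=
  lsum fun i => LinearMap.mulRight ℤ (a i)

lemma umbral_X_pow (a : ℕ → ℤ) (k : ℕ) : umbral a (X ^ k) = a k := by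
  simp [umbral, ← monomial_one_right_eq_X_pow]

lemma umbral_eq_sum_range (a : ℕ → ℤ) {q : ℤ[X]} {N : ℕ} (hq : q.natDegree < N) :
    umbral a q = ∑ l ∈ range N, q.coeff l * a l := by
  simp only [umbral, lsum_apply, LinearMap.mulRight_apply]
  exact sum_over_range' q (f := fun i c => c * a i) (fun _ => zero_mul _) N hq

lemma apply_add_eq_umbral {a : ℕ → ℤ} {f : ℕ → ℕ → ℤ} (hf0 : ∀ k, f 0 k = a k)
    (hf : ∀ n k, 1 ≤ n → n ≤ k →
      f n k = f (n - 1) (k - 1) + f (n - 1) k + f (n - 1) (k + 1))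
    (i k : ℕ) : f i (k + i) = umbral a (X ^ k * trinomialPoly ^ i) := by
  induction i generalizing k with
  | zero => rw [add_zero, pow_zero, mul_one, hf0, umbral_X_pow]
  | succ i ih =>
    have hrec : f (i + 1) (k + (i + 1)) = f i (k + i) + f i (k + 1 + i) + f i (k + 2 + i) := by
      rw [hf (i + 1) _ (by omega) (by omega), Nat.add_sub_cancel,
        show k + (i + 1) + 1 = k + 2 + i by omega, show k + (i + 1) - 1 = k + i by omega,
        show k + (i + 1) = k + 1 + i by omega]
    calc f (i + 1) (k + (i + 1))
        = umbral a (X ^ k * trinomialPoly ^ i) + umbral a (X ^ (k + 1) * trinomialPoly ^ i)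
            + umbral a (X ^ (k + 2) * trinomialPoly ^ i) := by rw [hrec, ih, ih, ih]
      _ = umbral a (X ^ k * trinomialPoly ^ (i + 1)) := by
        rw [← map_add, ← map_add, trinomialPoly]
        congr 1
        ring

theorem triangle_column_sum (a : ℕ → ℤ) (f : ℕ → ℕ → ℤ)
    (hf0 : ∀ k, f 0 k = a k)
    (hf : ∀ n k, 1 ≤ n → n ≤ k → f n k = f (n - 1) (k - 1) + f (n - 1) k + f (n - 1) (k + 1))
    (n : ℕ) :
    ∑ i ∈ Finset.range (n + 1), f i n =
      ∑ l ∈ Finset.range (2 * n + 1), (S n l : ℤ) * a l := by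
  have hdeg := Nat.lt_succ_of_le (natDegree_sum_X_pow_mul_trinomialPoly_pow_le n)
  calc ∑ i ∈ range (n + 1), f i n
      = ∑ j ∈ range (n + 1), f (n - j) (j + (n - j)) := by
        rw [← sum_range_reflect]
        refine sum_congr rfl fun j hj => ?_
        rw [Nat.add_sub_cancel, Nat.add_sub_of_le (Nat.lt_succ_iff.1 (mem_range.1 hj))]
    _ = umbral a (∑ j ∈ range (n + 1), X ^ j * trinomialPoly ^ (n - j)) := by
        simp only [map_sum, apply_add_eq_umbral hf0 hf]
    _ = ∑ l ∈ range (2 * n + 1), (S n l : ℤ) * a l := by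
        simp only [umbral_eq_sum_range a hdeg, S_eq_coeff]
end

section
/- Suppose (a_k) is a ternary linear recurrent integer sequence with a_k = α a_{k-1} + β a_{k-2} + γ a_{k-3} for k ≥ 3. Then in the trinomial transform triangle, every row satisfies the same recurrence: a(n,k) = α a(n,k-1) + β a(n,k-2) + γ a(n,k-3) for all 0 ≤ n ≤ k-3. -/
open Finset

/-! Each entry of row `n + 1` is the sum of a window of three consecutive entries of row `n`,
and a sum of shifts of a solution of a linear recurrence is again a solution. By induction on
`n`, every row satisfies the recurrence of row `0`, from column `n` on: the window feeding
column `m + 1` of row `n + 1` starts at column `m` of row `n`. -/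

def TernaryRecAt (α β γ : ℤ) (u : ℕ → ℤ) (k : ℕ) : Prop :=
  u (k + 3) = α * u (k + 2) + β * u (k + 1) + γ * u k

def windowSum (u : ℕ → ℤ) (k : ℕ) : ℤ :=
  u k + u (k + 1) + u (k + 2)

theorem TernaryRecAt.windowSum {α β γ : ℤ} {u : ℕ → ℤ} {k : ℕ}
    (h₀ : TernaryRecAt α β γ u k) (h₁ : TernaryRecAt α β γ u (k + 1))
    (h₂ : TernaryRecAt α β γ u (k + 2)) :
    TernaryRecAt α β γ (windowSum u) k := by
  unfold TernaryRecAt _root_.windowSum at *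
  linear_combination h₀ + h₁ + h₂

section Triangle

variable {f : ℕ → ℕ → ℤ}

theorem succ_row_eq_windowSum
    (hf : ∀ n k, 1 ≤ n → n ≤ k → f n k = f (n - 1) (k - 1) + f (n - 1) k + f (n - 1) (k + 1))
    {n j : ℕ} (hj : n ≤ j) :
    f (n + 1) (j + 1) = windowSum (f n) j := by
  simpa [windowSum, add_assoc] using hf (n + 1) (j + 1) (by omega) (by omega)

theorem row_ternaryRecAt {α β γ : ℤ} {a : ℕ → ℤ}
    (hf0 : ∀ k, f 0 k = a k)
    (hf : ∀ n k, 1 ≤ n → n ≤ k → f n k = f (n - 1) (k - 1) + f (n - 1) k + f (n - 1) (k + 1))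
    (ha : ∀ k, a (k + 3) = α * a (k + 2) + β * a (k + 1) + γ * a k) :
    ∀ n m, n ≤ m → TernaryRecAt α β γ (f n) m := by
  intro n
  induction n with
  | zero =>
    intro m _
    simpa only [TernaryRecAt, hf0] using ha m
  | succ n ih =>
    intro m hm
    obtain ⟨j, rfl⟩ : ∃ j, m = j + 1 := ⟨m - 1, by omega⟩
    have hwin : TernaryRecAt α β γ (windowSum (f n)) j :=
      (ih j (by omega)).windowSum (ih (j + 1) (by omega)) (ih (j + 2) (by omega))
    unfold TernaryRecAt at hwin ⊢
    rwa [succ_row_eq_windowSum hf (by omega : n ≤ j + 3),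
      succ_row_eq_windowSum hf (by omega : n ≤ j + 2),
      succ_row_eq_windowSum hf (by omega : n ≤ j + 1),
      succ_row_eq_windowSum hf (by omega : n ≤ j)]

end Triangle

theorem triangle_rows_same_recurrence_general (α β γ : ℤ) (a : ℕ → ℤ) (f : ℕ → ℕ → ℤ)
    (hf0 : ∀ k, f 0 k = a k)
    (hf : ∀ n k, 1 ≤ n → n ≤ k → f n k = f (n - 1) (k - 1) + f (n - 1) k + f (n - 1) (k + 1))
    (ha : ∀ k, a (k + 3) = α * a (k + 2) + β * a (k + 1) + γ * a k)
    (n k : ℕ) (hnk : n + 3 ≤ k) :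
    f n k = α * f n (k - 1) + β * f n (k - 2) + γ * f n (k - 3) := by
  obtain ⟨m, rfl⟩ : ∃ m, k = m + 3 := ⟨k - 3, by omega⟩
  simpa [TernaryRecAt] using row_ternaryRecAt hf0 hf ha n m (by omega)

theorem triangle_rows_same_recurrence (α β γ : ℤ) (hγ : γ ≠ 0) (a : ℕ → ℤ) (f : ℕ → ℕ → ℤ)
    (hf0 : ∀ k, f 0 k = a k)
    (hf : ∀ n k, 1 ≤ n → n ≤ k → f n k = f (n - 1) (k - 1) + f (n - 1) k + f (n - 1) (k + 1))
    (ha : ∀ k, a (k + 3) = α * a (k + 2) + β * a (k + 1) + γ * a k)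
    (n k : ℕ) (hnk : n + 3 ≤ k) :
    f n k = α * f n (k - 1) + β * f n (k - 2) + γ * f n (k - 3) :=
  triangle_rows_same_recurrence_general α β γ a f hf0 hf ha n k hnk
end

section
/- Let (a_k) satisfy a_k = α a_{k-1} + β a_{k-2} + γ a_{k-3}, and set A = α²+α+2β+3, B = -2α²+αβ+2αγ-β²-2α-3β+3γ-3, C = α²-αβ-αγ+β²-βγ+γ²+α+β-2γ+1. Then for the trinomial transform triangle, each diagonal satisfies a(n, n+ℓ) = A·a(n-1, n+ℓ-1) + B·a(n-2, n+ℓ-2) + C·a(n-3, n+ℓ-3) for all n ≥ 3 and ℓ ≥ 0. -/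
private lemma aux_diag {R : Type*} [CommRing R] (α β γ A B C : R) (g : ℕ → ℕ → R)
    (hg : ∀ n l, g (n + 1) l = g n l + g n (l + 1) + g n (l + 2))
    (hga : ∀ l, g 0 (l + 3) = α * g 0 (l + 2) + β * g 0 (l + 1) + γ * g 0 l)
    (hA : A = α ^ 2 + α + 2 * β + 3)
    (hB : B = -2 * α ^ 2 + α * β + 2 * α * γ - β ^ 2 - 2 * α - 3 * β + 3 * γ - 3)
    (hC : C = α ^ 2 - α * β - α * γ + β ^ 2 - β * γ + γ ^ 2 + α + β - 2 * γ + 1) :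
    ∀ n l, g (n + 3) l = A * g (n + 2) l + B * g (n + 1) l + C * g n l := by
  intro n
  induction n with
  | zero =>
    intro l
    have e1 : ∀ l, g 1 l = g 0 l + g 0 (l + 1) + g 0 (l + 2) := hg 0
    have e2 : ∀ l, g 2 l = g 1 l + g 1 (l + 1) + g 1 (l + 2) := hg 1
    have e3 : ∀ l, g 3 l = g 2 l + g 2 (l + 1) + g 2 (l + 2) := hg 2
    have h3 : g 0 (l + 3) = α * g 0 (l + 2) + β * g 0 (l + 1) + γ * g 0 l := hga l
    have h4 : g 0 (l + 4) = α * g 0 (l + 3) + β * g 0 (l + 2) + γ * g 0 (l + 1) := hga (l + 1)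
    have h5 : g 0 (l + 5) = α * g 0 (l + 4) + β * g 0 (l + 3) + γ * g 0 (l + 2) := hga (l + 2)
    have h6 : g 0 (l + 6) = α * g 0 (l + 5) + β * g 0 (l + 4) + γ * g 0 (l + 3) := hga (l + 3)
    show g 3 l = A * g 2 l + B * g 1 l + C * g 0 l
    simp only [e3, e2, e1, add_assoc, Nat.reduceAdd]
    subst hA hB hC
    linear_combination h6 + (3 + α) * h5 + (3 + 2 * α - β) * h4 + (1 + α - β + γ) * h3
  | succ n ih =>
    intro l
    show g (n + 4) l = A * g (n + 3) l + B * g (n + 2) l + C * g (n + 1) l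
    have e4 : g (n + 4) l = g (n + 3) l + g (n + 3) (l + 1) + g (n + 3) (l + 2) := hg (n + 3) l
    have f2 : g (n + 3) l = g (n + 2) l + g (n + 2) (l + 1) + g (n + 2) (l + 2) := hg (n + 2) l
    have f1 : g (n + 2) l = g (n + 1) l + g (n + 1) (l + 1) + g (n + 1) (l + 2) := hg (n + 1) l
    have f0 : g (n + 1) l = g n l + g n (l + 1) + g n (l + 2) := hg n l
    linear_combination e4 + ih l + ih (l + 1) + ih (l + 2) - A * f2 - B * f1 - C * f0

theorem triangle_diagonal_recurrence {R : Type*} [CommRing R] (α β γ : R)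
    (a : ℕ → R) (f : ℕ → ℕ → R)
    (hf0 : ∀ k, f 0 k = a k)
    (hf : ∀ n k, 1 ≤ n → n ≤ k → f n k = f (n - 1) (k - 1) + f (n - 1) k + f (n - 1) (k + 1))
    (ha : ∀ k, a (k + 3) = α * a (k + 2) + β * a (k + 1) + γ * a k)
    (A B C : R)
    (hA : A = α ^ 2 + α + 2 * β + 3)
    (hB : B = -2 * α ^ 2 + α * β + 2 * α * γ - β ^ 2 - 2 * α - 3 * β + 3 * γ - 3)
    (hC : C = α ^ 2 - α * β - α * γ + β ^ 2 - β * γ + γ ^ 2 + α + β - 2 * γ + 1)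
    (m l : ℕ) :
    f (m + 3) (m + 3 + l) =
      A * f (m + 2) (m + 2 + l) + B * f (m + 1) (m + 1 + l) + C * f m (m + l) := by
  have hg : ∀ n l, f (n + 1) (n + 1 + l) = f n (n + l) + f n (n + (l + 1)) + f n (n + (l + 2)) := by
    intro n l
    have h := hf (n + 1) (n + 1 + l) (by omega) (by omega)
    rw [show n + 1 - 1 = n by omega, show n + 1 + l - 1 = n + l by omega,
        show n + 1 + l = n + (l + 1) by omega] at h
    rw [show n + (l + 1) + 1 = n + (l + 2) by omega] at h
    rw [show n + 1 + l = n + (l + 1) by omega]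
    exact h
  have hga : ∀ l, f 0 (0 + (l + 3)) = α * f 0 (0 + (l + 2)) + β * f 0 (0 + (l + 1)) + γ * f 0 (0 + l) := by
    intro l
    simp only [Nat.zero_add, hf0]
    exact ha l
  exact aux_diag α β γ A B C (fun n l => f n (n + l)) hg hga hA hB hC m l
end

section
/- Let (a_k) satisfy a_k = α a_{k-1} + β a_{k-2} + γ a_{k-3}. With P = αγ - β + 3γ, Q = αβ - 2αγ + βγ - α + 2β, and C = α²-αβ-αγ+β²-βγ+γ²+α+β-2γ+1, the columns of the trinomial transform triangle satisfy γ·a(n,k) = P·a(n-1,k) + Q·a(n-2,k) + C·a(n-3,k) for all 3 ≤ n ≤ k. -/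
theorem triangle_column_recurrence {R : Type*} [CommRing R] (α β γ : R)
    (a : ℕ → R) (f : ℕ → ℕ → R)
    (hf0 : ∀ k, f 0 k = a k)
    (hf : ∀ n k, 1 ≤ n → n ≤ k → f n k = f (n - 1) (k - 1) + f (n - 1) k + f (n - 1) (k + 1))
    (ha : ∀ k, a (k + 3) = α * a (k + 2) + β * a (k + 1) + γ * a k)
    (P Q C : R)
    (hP : P = α * γ - β + 3 * γ)
    (hQ : Q = α * β - 2 * α * γ + β * γ - α + 2 * β)
    (hC : C = α ^ 2 - α * β - α * γ + β ^ 2 - β * γ + γ ^ 2 + α + β - 2 * γ + 1)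
    (n k : ℕ) (hn : 3 ≤ n) (hk : n ≤ k) :
    γ * f n k = P * f (n - 1) k + Q * f (n - 2) k + C * f (n - 3) k := by
  have e1 : ∀ m : ℕ, f 1 (m + 1) = a m + a (m + 1) + a (m + 2) := by
    intro m
    rw [hf 1 (m + 1) le_rfl (by omega)]
    simp [hf0]
  have e2 : ∀ m : ℕ, f 2 (m + 2) =
      a m + 2 * a (m + 1) + 3 * a (m + 2) + 2 * a (m + 3) + a (m + 4) := by
    intro m
    rw [hf 2 (m + 2) (by omega) (by omega)]
    have h1 := e1 m
    have h2 := e1 (m + 1)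
    have h3 := e1 (m + 2)
    simp only [show m + 2 - 1 = m + 1 from rfl, show (2:ℕ) - 1 = 1 from rfl,
      show m + 1 + 1 = m + 2 from rfl, show m + 2 + 1 = m + 3 from rfl,
      show m + 1 + 2 = m + 3 from rfl, show m + 2 + 2 = m + 4 from rfl] at *
    rw [h1, h2, h3]; ring
  have e3 : ∀ m : ℕ, f 3 (m + 3) =
      a m + 3 * a (m + 1) + 6 * a (m + 2) + 7 * a (m + 3) + 6 * a (m + 4)
        + 3 * a (m + 5) + a (m + 6) := by
    intro m
    rw [hf 3 (m + 3) (by omega) (by omega)]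
    have h1 := e2 m
    have h2 := e2 (m + 1)
    have h3 := e2 (m + 2)
    simp only [show m + 3 - 1 = m + 2 from rfl, show (3:ℕ) - 1 = 2 from rfl,
      show m + 3 + 1 = m + 4 from rfl, show m + 1 + 2 = m + 3 from rfl,
      show m + 2 + 2 = m + 4 from rfl, show m + 1 + 3 = m + 4 from rfl,
      show m + 2 + 3 = m + 5 from rfl, show m + 1 + 4 = m + 5 from rfl,
      show m + 2 + 4 = m + 6 from rfl] at *
    rw [h1, h2, h3]; ring
  have key : ∀ d k : ℕ, d + 3 ≤ k →
      γ * f (d + 3) k = P * f (d + 2) k + Q * f (d + 1) k + C * f d k := by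
    intro d
    induction d with
    | zero =>
      intro k hk
      obtain ⟨m, rfl⟩ : ∃ m, k = m + 3 := ⟨k - 3, by omega⟩
      rw [e3 m, hf0, show f 2 (m + 3) = f 2 (m + 1 + 2) from rfl,
        show f 1 (m + 3) = f 1 (m + 2 + 1) from rfl, e2 (m + 1), e1 (m + 2)]
      simp only [show m + 1 + 1 = m + 2 from rfl, show m + 1 + 2 = m + 3 from rfl,
        show m + 1 + 3 = m + 4 from rfl, show m + 1 + 4 = m + 5 from rfl,
        show m + 2 + 1 = m + 3 from rfl, show m + 2 + 2 = m + 4 from rfl]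
      have r0 := ha m
      have r1 := ha (m + 1)
      have r2 := ha (m + 2)
      have r3 := ha (m + 3)
      simp only [show m + 1 + 3 = m + 4 from rfl, show m + 1 + 2 = m + 3 from rfl,
        show m + 1 + 1 = m + 2 from rfl, show m + 2 + 3 = m + 5 from rfl,
        show m + 2 + 2 = m + 4 from rfl, show m + 2 + 1 = m + 3 from rfl,
        show m + 3 + 3 = m + 6 from rfl, show m + 3 + 2 = m + 5 from rfl,
        show m + 3 + 1 = m + 4 from rfl] at r0 r1 r2 r3
      subst hP hQ hC
      rw [r3, r2, r1, r0]
      ring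
    | succ p ih =>
      intro k hk
      obtain ⟨j, rfl⟩ : ∃ j, k = j + 1 := ⟨k - 1, by omega⟩
      have E4 := hf (p + 4) (j + 1) (by omega) (by omega)
      have E3 := hf (p + 3) (j + 1) (by omega) (by omega)
      have E2 := hf (p + 2) (j + 1) (by omega) (by omega)
      have E1 := hf (p + 1) (j + 1) (by omega) (by omega)
      simp only [show p + 4 - 1 = p + 3 from rfl, show p + 3 - 1 = p + 2 from rfl,
        show p + 2 - 1 = p + 1 from rfl, show p + 1 - 1 = p from rfl,
        show j + 1 - 1 = j from rfl] at E4 E3 E2 E1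
      have h1 := ih j (by omega)
      have h2 := ih (j + 1) (by omega)
      have h3 := ih (j + 2) (by omega)
      show γ * f (p + 4) (j + 1) = P * f (p + 3) (j + 1) + Q * f (p + 2) (j + 1)
        + C * f (p + 1) (j + 1)
      linear_combination γ * E4 + h1 + h2 + h3 - P * E3 - Q * E2 - C * E1
  have hgoal := key (n - 3) k (by omega)
  have h1 : n - 3 + 3 = n := by omega
  have h2 : n - 3 + 2 = n - 1 := by omega
  have h3 : n - 3 + 1 = n - 2 := by omega
  rw [h1, h2, h3] at hgoal
  exact hgoal
end

section
/- Let (F_k) be the Fibonacci sequence. In the trinomial transform triangle generated by a(0,k)=F_k, the entries satisfy a(n,k) = 2^n · F_{k+n} for all 0 ≤ n ≤ k, and the diagonal (trinomial transform of Fibonacci) satisfies b_n = a(n,n) = 2^n F_{2n}, which obeys b_n = 6 b_{n-1} - 4 b_{n-2} with b_0 = 0, b_1 = 2. -/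
theorem fibonacci_trinomial_triangle (f : ℕ → ℕ → ℤ)
    (hf0 : ∀ k, f 0 k = Nat.fib k)
    (hf : ∀ n k, 1 ≤ n → n ≤ k → f n k = f (n - 1) (k - 1) + f (n - 1) k + f (n - 1) (k + 1)) :
    (∀ n k, n ≤ k → f n k = 2 ^ n * Nat.fib (k + n)) ∧
    (∀ n, f n n = 2 ^ n * Nat.fib (2 * n)) ∧
    f 0 0 = 0 ∧ f 1 1 = 2 ∧
    (∀ n, f (n + 2) (n + 2) = 6 * f (n + 1) (n + 1) - 4 * f n n) := by
  have main : ∀ n k, n ≤ k → f n k = 2 ^ n * Nat.fib (k + n) := by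
    intro n
    induction n with
    | zero => intro k _; simpa using hf0 k
    | succ m ih =>
      intro k hk
      have hk1 : 1 ≤ k := le_trans (Nat.succ_le_succ (Nat.zero_le m)) hk
      obtain ⟨j, rfl⟩ : ∃ j, k = j + 1 := ⟨k - 1, (Nat.succ_pred_eq_of_pos hk1).symm⟩
      have hm : m ≤ j := Nat.succ_le_succ_iff.mp hk
      rw [hf (m + 1) (j + 1) (Nat.le_add_left 1 m) hk]
      simp only [Nat.add_sub_cancel]
      rw [ih j hm, ih (j + 1) (le_trans hm (Nat.le_succ j)),
        ih (j + 2) (le_trans hm (by omega))]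
      have h1 : (Nat.fib (j + m) : ℤ) + Nat.fib (j + 1 + m) = Nat.fib (j + 2 + m) := by
        have := Nat.fib_add_two (n := j + m)
        push_cast [show j + 2 + m = j + m + 2 by ring, show j + 1 + m = j + m + 1 by ring] at *
        omega
      have h2 : j + 1 + (m + 1) = j + 2 + m := by ring
      rw [h2]
      linear_combination (2:ℤ) ^ m * h1
  have diag : ∀ n, f n n = 2 ^ n * Nat.fib (2 * n) := by
    intro n
    have := main n n le_rfl
    rwa [show n + n = 2 * n by ring] at this
  refine ⟨main, diag, ?_, ?_, ?_⟩
  · simp [diag 0]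
  · simp [diag 1]
  · intro n
    rw [diag, diag, diag]
    have hfib : (Nat.fib (2 * (n + 2)) : ℤ) = 3 * Nat.fib (2 * (n + 1)) - Nat.fib (2 * n) := by
      have e2 : Nat.fib (2 * n + 2) = Nat.fib (2 * n + 1) + Nat.fib (2 * n) := by rw [Nat.fib_add_two]; ring
      have e3 : Nat.fib (2 * n + 3) = Nat.fib (2 * n + 2) + Nat.fib (2 * n + 1) := by rw [show 2*n+3 = 2*n+1+2 by ring, Nat.fib_add_two]; ring_nf
      have e4 : Nat.fib (2 * n + 4) = Nat.fib (2 * n + 3) + Nat.fib (2 * n + 2) := by rw [show 2*n+4 = 2*n+2+2 by ring, Nat.fib_add_two, show 2*n+2+1 = 2*n+3 by ring]; ring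
      rw [show 2 * (n + 2) = 2 * n + 4 by ring, show 2 * (n + 1) = 2 * n + 2 by ring]
      omega
    rw [hfib]
    ring
end
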